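/- arXiv:1805.00653 — 3 statements merged into one kernel-verified Lean document; each statement's English description precedes it below -/
import Mathlib

section
/- Let λ > 0 and let a ∈ ℝ. Then ∫₀^∞ r^{-2} e^{-λr} (1 - cos(ar)) dr = a·arctan(a/λ) - (λ/2)·ln(λ² + a²) + λ·ln λ. -/
/-!
Differentiate twice under the integral sign in `a`. The `a`-derivative of the integral is
`∫ e^{-λr} sin(ar)/r dr`, whose `a`-derivative is in turn the Laplace transform
`∫ e^{-λr} cos(ar) dr = λ/(λ² + a²)`, the real part of `∫ e^{(-λ+ia)r} dr = 1/(λ - ia)`.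
Both integrals vanish at `a = 0`, so integrating back gives first `arctan(a/λ)` and then the
closed form. Differentiation is justified by domination: every `a`-derivative is at most
`(1 + |a|) e^{-λr}`, because `|sin t| ≤ |t|` and `0 ≤ 1 - cos t ≤ t²/2`.
-/

open Real MeasureTheory Set Filter Topology

theorem eq_of_hasDerivAt_eq {E : Type*} [NormedAddCommGroup E] [NormedSpace ℝ E]
    {f g f' : ℝ → E} (hf : ∀ x, HasDerivAt f (f' x) x) (hg : ∀ x, HasDerivAt g (f' x) x)
    {x₀ : ℝ} (h : f x₀ = g x₀) : f = g :=
  eq_of_fderiv_eq (fun x => (hf x).differentiableAt) (fun x => (hg x).differentiableAt)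
    (fun x => by rw [(hf x).hasFDerivAt.fderiv, (hg x).hasFDerivAt.fderiv]) x₀ h

theorem hasDerivAt_integral_of_norm_deriv_le_mul {α E : Type*} [MeasurableSpace α]
    {μ : Measure α} [NormedAddCommGroup E] [NormedSpace ℝ E] {F F' : ℝ → α → E}
    {g : α → ℝ}
    (hF : ∀ y, Integrable (F y) μ) (hF' : ∀ y, AEStronglyMeasurable (F' y) μ)
    (hg : Integrable g μ) (h_deriv : ∀ᵐ r ∂μ, ∀ y, HasDerivAt (F · r) (F' y r) y)
    (h_bound : ∀ᵐ r ∂μ, ∀ y, ‖F' y r‖ ≤ (1 + |y|) * g r) (x : ℝ) :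
    HasDerivAt (fun y => ∫ r, F y r ∂μ) (∫ r, F' x r ∂μ) x := by
  refine (hasDerivAt_integral_of_dominated_loc_of_deriv_le (Metric.ball_mem_nhds x one_pos)
    (Eventually.of_forall fun y => (hF y).aestronglyMeasurable) (hF x) (hF' x)
    (bound := fun r => (2 + |x|) * g r) ?_ (hg.const_mul _) ?_).2
  · filter_upwards [h_bound] with r hr y hy
    have hg0 : 0 ≤ g r :=
      nonneg_of_mul_nonneg_right ((norm_nonneg _).trans (hr x)) (by positivity)
    have hy : |y| ≤ 1 + |x| := by
      have := abs_sub_abs_le_abs_sub y x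
      rw [Metric.mem_ball, Real.dist_eq] at hy
      linarith
    exact (hr y).trans (mul_le_mul_of_nonneg_right (by linarith) hg0)
  · filter_upwards [h_deriv] with r hr y _ using hr y

theorem integrableOn_Ioi_of_abs_le_mul_exp {lam : ℝ} (hlam : 0 < lam) {f : ℝ → ℝ}
    (hf : Measurable f) {C : ℝ} (h : ∀ r > 0, |f r| ≤ C * exp (-lam * r)) :
    IntegrableOn f (Ioi 0) :=
  ((exp_neg_integrableOn_Ioi 0 hlam).const_mul C).mono' hf.aestronglyMeasurable
    ((ae_restrict_iff' measurableSet_Ioi).2 (Eventually.of_forall h))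

theorem abs_exp_mul_le {s t C : ℝ} (ht : |t| ≤ C) : |exp s * t| ≤ C * exp s := by
  rw [abs_mul, abs_exp, mul_comm]
  exact mul_le_mul_of_nonneg_right ht (exp_pos _).le

theorem abs_sin_mul_div_le (y : ℝ) {r : ℝ} (hr : 0 < r) : |sin (y * r) / r| ≤ |y| := by
  rw [abs_div, abs_of_pos hr, div_le_iff₀ hr]
  calc |sin (y * r)| ≤ |y * r| := abs_sin_le_abs
    _ = |y| * r := by rw [abs_mul, abs_of_pos hr]

theorem abs_one_sub_cos_mul_div_sq_le (y r : ℝ) : |(1 - cos (y * r)) / r ^ 2| ≤ y ^ 2 / 2 := by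
  rcases eq_or_ne r 0 with rfl | hr
  · simp only [mul_zero, cos_zero, sub_self, zero_div, abs_zero]
    positivity
  rw [abs_of_nonneg (div_nonneg (sub_nonneg.2 (cos_le_one _)) (sq_nonneg r)),
    div_le_iff₀ (by positivity)]
  linarith [one_sub_sq_div_two_le_cos (x := y * r), mul_pow y r 2]

theorem hasDerivAt_exp_mul_sin_mul_div (lam : ℝ) {r : ℝ} (hr : r ≠ 0) (y : ℝ) :
    HasDerivAt (fun y => exp (-lam * r) * sin (y * r) / r) (exp (-lam * r) * cos (y * r)) y := by
  refine ((((hasDerivAt_mul_const (x := y) r).sin).const_mul (exp (-lam * r))).div_const r)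
    |>.congr_deriv ?_
  field_simp

theorem hasDerivAt_exp_mul_one_sub_cos_mul_div_sq (lam : ℝ) {r : ℝ} (hr : r ≠ 0) (y : ℝ) :
    HasDerivAt (fun y => exp (-lam * r) * (1 - cos (y * r)) / r ^ 2)
      (exp (-lam * r) * sin (y * r) / r) y := by
  refine ((((hasDerivAt_mul_const (x := y) r).cos.const_sub 1).const_mul
    (exp (-lam * r))).div_const (r ^ 2)).congr_deriv ?_
  field_simp

theorem integral_exp_neg_mul_cos {lam : ℝ} (hlam : 0 < lam) (a : ℝ) :
    ∫ r in Ioi (0:ℝ), exp (-lam * r) * cos (a * r) = lam / (lam ^ 2 + a ^ 2) := by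
  have hre : (-lam + a * Complex.I).re < 0 := by simpa using hlam
  have h := congrArg Complex.re (integral_exp_mul_complex_Ioi hre 0)
  rw [← RCLike.re_eq_complex_re, ← integral_re (integrableOn_exp_mul_complex_Ioi hre 0)] at h
  convert h using 1
  · congr with r
    simp [Complex.exp_re]
  · simp [Complex.div_re, Complex.normSq]
    field_simp

theorem hasDerivAt_arctan_div {lam : ℝ} (hlam : lam ≠ 0) (x : ℝ) :
    HasDerivAt (fun x => arctan (x / lam)) (lam / (lam ^ 2 + x ^ 2)) x := by
  refine ((hasDerivAt_id' x).div_const lam).arctan.congr_deriv ?_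
  field_simp

theorem hasDerivAt_integral_exp_neg_mul_sin_mul_div {lam : ℝ} (hlam : 0 < lam) (x : ℝ) :
    HasDerivAt (fun y => ∫ r in Ioi (0:ℝ), exp (-lam * r) * sin (y * r) / r)
      (lam / (lam ^ 2 + x ^ 2)) x := by
  rw [← integral_exp_neg_mul_cos hlam x]
  refine hasDerivAt_integral_of_norm_deriv_le_mul
    (F' := fun y r => exp (-lam * r) * cos (y * r)) (fun y => ?_)
    (fun _ => (by fun_prop : Measurable _).aestronglyMeasurable)
    (exp_neg_integrableOn_Ioi 0 hlam) ?_ ?_ x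
  · refine integrableOn_Ioi_of_abs_le_mul_exp hlam (C := |y|) (by fun_prop) fun r hr => ?_
    rw [mul_div_assoc]
    exact abs_exp_mul_le (abs_sin_mul_div_le y hr)
  · exact ae_restrict_of_forall_mem measurableSet_Ioi fun r hr y =>
      hasDerivAt_exp_mul_sin_mul_div lam hr.ne' y
  · exact ae_restrict_of_forall_mem measurableSet_Ioi fun r _ y =>
      abs_exp_mul_le ((abs_cos_le_one _).trans (by simp))

theorem integral_exp_neg_mul_sin_mul_div {lam : ℝ} (hlam : 0 < lam) (a : ℝ) :
    ∫ r in Ioi (0:ℝ), exp (-lam * r) * sin (a * r) / r = arctan (a / lam) :=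
  congrFun (eq_of_hasDerivAt_eq (hasDerivAt_integral_exp_neg_mul_sin_mul_div hlam)
    (hasDerivAt_arctan_div hlam.ne') (x₀ := 0) (by simp)) a

theorem hasDerivAt_integral_exp_neg_mul_one_sub_cos_mul_div_sq {lam : ℝ} (hlam : 0 < lam)
    (x : ℝ) :
    HasDerivAt (fun y => ∫ r in Ioi (0:ℝ), exp (-lam * r) * (1 - cos (y * r)) / r ^ 2)
      (arctan (x / lam)) x := by
  rw [← integral_exp_neg_mul_sin_mul_div hlam x]
  refine hasDerivAt_integral_of_norm_deriv_le_mul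
    (F' := fun y r => exp (-lam * r) * sin (y * r) / r) (fun y => ?_)
    (fun _ => (by fun_prop : Measurable _).aestronglyMeasurable)
    (exp_neg_integrableOn_Ioi 0 hlam) ?_ ?_ x
  · refine integrableOn_Ioi_of_abs_le_mul_exp hlam (C := y ^ 2 / 2) (by fun_prop) fun r _ => ?_
    rw [mul_div_assoc]
    exact abs_exp_mul_le (abs_one_sub_cos_mul_div_sq_le y r)
  · exact ae_restrict_of_forall_mem measurableSet_Ioi fun r hr y =>
      hasDerivAt_exp_mul_one_sub_cos_mul_div_sq lam hr.ne' y
  · refine ae_restrict_of_forall_mem measurableSet_Ioi fun r hr y => ?_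
    rw [mul_div_assoc]
    exact abs_exp_mul_le ((abs_sin_mul_div_le y hr).trans (by simp))

theorem hasDerivAt_mul_arctan_div_sub_log {lam : ℝ} (hlam : lam ≠ 0) (c x : ℝ) :
    HasDerivAt (fun x => x * arctan (x / lam) - lam / 2 * log (lam ^ 2 + x ^ 2) + c)
      (arctan (x / lam)) x := by
  have hpos : 0 < lam ^ 2 + x ^ 2 := by positivity
  have hlog : HasDerivAt (fun x => log (lam ^ 2 + x ^ 2)) (2 * x / (lam ^ 2 + x ^ 2)) x := by
    refine ((hasDerivAt_pow 2 x).const_add (lam ^ 2)).log hpos.ne' |>.congr_deriv ?_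
    ring
  refine ((((hasDerivAt_id' x).mul (hasDerivAt_arctan_div hlam x)).sub
    (hlog.const_mul (lam / 2))).add_const c).congr_deriv ?_
  field_simp
  ring

/-- The Fourier-symbol integral of the tempered fractional Laplacian at `β = 1`:
`∫₀^∞ r⁻² e^{-λr}(1 - cos(ar)) dr = a arctan(a/λ) - (λ/2) log(λ²+a²) + λ log λ`. -/
theorem stmt_3 (lam a : ℝ) (hlam : 0 < lam) :
    ∫ r in Set.Ioi (0:ℝ), Real.exp (-lam * r) * (1 - Real.cos (a * r)) / r ^ 2
      = a * Real.arctan (a / lam) - (lam / 2) * Real.log (lam ^ 2 + a ^ 2)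
        + lam * Real.log lam := by
  have h_zero : ∫ r in Ioi (0:ℝ), exp (-lam * r) * (1 - cos (0 * r)) / r ^ 2
      = 0 * arctan (0 / lam) - lam / 2 * log (lam ^ 2 + 0 ^ 2) + lam * log lam := by
    simp only [mul_zero, zero_mul, cos_zero, sub_self, zero_div, integral_zero, arctan_zero,
      ne_eq, OfNat.ofNat_ne_zero, not_false_eq_true, zero_pow, add_zero, log_pow]
    push_cast
    ring
  exact congrFun (eq_of_hasDerivAt_eq
    (hasDerivAt_integral_exp_neg_mul_one_sub_cos_mul_div_sq hlam)
    (hasDerivAt_mul_arctan_div_sub_log hlam.ne' (lam * log lam)) h_zero) a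
end

section
/- Let λ > 0 and β ∈ (1,2), and let a ∈ ℝ. Setting η = arctan(a/λ), one has ∫₀^∞ r^{-1-β} e^{-λr} (sin(ar) - ar) dr = -Γ(-β)(λ² + a²)^{β/2} sin(βη) - Γ(1-β) λ^{β-1} a. -/
/-!
With `w = λ - a i`, the integrand is the imaginary part of
`t^(-β-1) (e^(-wt) - 1 + wt) + a i t^(-β) (1 - e^(-λt))`, so the integral is read off from the
Mellin transforms `𝓜[e^(-zt) - 1 + zt](s) = Γ(s) z^(-s)` for `-2 < Re s < -1` and
`𝓜[1 - e^(-zt)](s) = -Γ(s) z^(-s)` for `-1 < Re s < 0`, valid for `Re z > 0`.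
Both come from `𝓜[e^(-zt)](s) = Γ(s) z^(-s)` (`Re s > 0`) by integrating by parts, each step
lowering `Re s` by one; that formula is known for real `z > 0` and extends to `Re z > 0` by
analytic continuation in `z`.
-/

open Real MeasureTheory Set Filter Topology Asymptotics

theorem hasDerivAt_ofReal_cpow {t : ℝ} (ht : 0 < t) (s : ℂ) :
    HasDerivAt (fun x : ℝ => (x : ℂ) ^ s) (s * (t : ℂ) ^ (s - 1)) t := by
  simpa using ((hasDerivAt_id (t : ℂ)).cpow_const (Complex.ofReal_mem_slitPlane.2 ht)).comp_ofReal

theorem tendsto_ofReal_cpow_mul_of_isBigO {f : ℝ → ℂ} {l : Filter ℝ} {s : ℂ} {b : ℝ}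
    (hf : f =O[l] (· ^ (-b))) (hl : ∀ᶠ t in l, 0 < t)
    (hlim : Tendsto (· ^ (s.re - b)) l (𝓝 0)) :
    Tendsto (fun t : ℝ => (t : ℂ) ^ s * f t) l (𝓝 0) := by
  have hpow : (fun t : ℝ => (t : ℂ) ^ s) =O[l] (· ^ s.re) :=
    isBigO_iff.2 ⟨1, hl.mono fun t ht => by
      rw [Complex.norm_cpow_eq_rpow_re_of_pos ht, one_mul, Real.norm_of_nonneg (by positivity)]⟩
  refine (hpow.mul hf).trans_tendsto ?_
  refine hlim.congr' (hl.mono fun t ht => ?_)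
  rw [sub_eq_add_neg, Real.rpow_add ht]

theorem tendsto_rpow_nhdsGT_zero {p : ℝ} (hp : 0 < p) :
    Tendsto (· ^ p) (𝓝[>] (0 : ℝ)) (𝓝 0) := by
  have := (Real.continuousAt_rpow_const 0 p (Or.inr hp.le)).tendsto
  rw [Real.zero_rpow hp.ne'] at this
  exact this.mono_left nhdsWithin_le_nhds

theorem mellin_deriv_of_isBigO_rpow {f f' : ℝ → ℂ} {s : ℂ} {a b : ℝ}
    (hf : ∀ t ∈ Ioi 0, HasDerivAt f (f' t) t) (hf' : MellinConvergent f' (s + 1))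
    (hf_top : f =O[atTop] (· ^ (-a))) (hs_top : s.re < a)
    (hf_bot : f =O[𝓝[>] 0] (· ^ (-b))) (hs_bot : b < s.re) :
    mellin f' (s + 1) = -s * mellin f s := by
  have hfs : MellinConvergent f s :=
    mellinConvergent_of_isBigO_rpow
      (ContinuousOn.locallyIntegrableOn (fun t ht => (hf t ht).continuousAt.continuousWithinAt)
        measurableSet_Ioi) hf_top hs_top hf_bot hs_bot
  have h_top : Tendsto (fun t : ℝ => (t : ℂ) ^ s * f t) atTop (𝓝 0) :=
    tendsto_ofReal_cpow_mul_of_isBigO hf_top (eventually_gt_atTop 0)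
      (by simpa using tendsto_rpow_neg_atTop (sub_pos.2 hs_top))
  have h_bot : Tendsto (fun t : ℝ => (t : ℂ) ^ s * f t) (𝓝[>] 0) (𝓝 0) :=
    tendsto_ofReal_cpow_mul_of_isBigO hf_bot self_mem_nhdsWithin
      (tendsto_rpow_nhdsGT_zero (sub_pos.2 hs_bot))
  have hibp := integral_Ioi_mul_deriv_eq_deriv_mul (fun t ht => hasDerivAt_ofReal_cpow ht s) hf
    (by simpa [MellinConvergent, Pi.mul_def] using hf')
    (by simpa [IntegrableOn, Pi.mul_def, mul_assoc] using hfs.const_mul s)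
    h_bot h_top
  simp only [mellin, add_sub_cancel_right, smul_eq_mul, hibp, sub_zero, zero_sub, mul_assoc,
    integral_const_mul, neg_mul]

theorem norm_cexp_neg_mul_ofReal (z : ℂ) (t : ℝ) :
    ‖Complex.exp (-z * t)‖ = rexp (-z.re * t) := by
  simp [Complex.norm_exp]

theorem mellinConvergent_cexp_neg_mul {s z : ℂ} (hs : 0 < s.re) (hz : 0 < z.re) :
    MellinConvergent (fun t : ℝ => Complex.exp (-z * t)) s := by
  have hcont : Continuous fun t : ℝ => Complex.exp (-z * t) := by fun_prop
  refine mellinConvergent_of_isBigO_rpow_exp hz (hcont.locallyIntegrable.locallyIntegrableOn _)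
    (isBigO_of_le _ fun t => ?_) (b := 0) ?_ hs
  · rw [norm_cexp_neg_mul_ofReal, Real.norm_of_nonneg (exp_pos _).le]
  · simpa using (hcont.continuousAt.isBigO_one ℝ).mono nhdsWithin_le_nhds

theorem mellin_cexp_neg_mul_ofReal {s : ℂ} (hs : 0 < s.re) {r : ℝ} (hr : 0 < r) :
    mellin (fun t : ℝ => Complex.exp (-r * t)) s = Complex.Gamma s * (r : ℂ) ^ (-s) := by
  have h := Complex.integral_cpow_mul_exp_neg_mul_Ioi hs hr
  simp only [mellin, smul_eq_mul, neg_mul]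
  have harg : (r : ℂ).arg ≠ π := by
    rw [Complex.arg_ofReal_of_nonneg hr.le]; exact pi_ne_zero.symm
  rw [h, mul_comm, one_div, Complex.inv_cpow _ _ harg, Complex.cpow_neg]

theorem differentiableAt_mellin_cexp_neg_mul {s z : ℂ} (hs : 0 < s.re) (hz : 0 < z.re) :
    DifferentiableAt ℂ (fun w : ℂ => mellin (fun t : ℝ => Complex.exp (-w * t)) s) z := by
  have hc : 0 < z.re / 2 := half_pos hz
  have hball : ∀ w ∈ Metric.ball z (z.re / 2), z.re / 2 < w.re := fun w hw => by
    have := (Complex.abs_re_le_norm (w - z)).trans_lt (mem_ball_iff_norm.1 hw)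
    rw [Complex.sub_re] at this
    linarith [(abs_lt.1 this).1]
  have hmeas : ∀ g : ℝ → ℂ, Continuous g →
      AEStronglyMeasurable (fun t : ℝ => (t : ℂ) ^ (s - 1) • g t) (volume.restrict (Ioi 0)) :=
    fun g hg => ContinuousOn.aestronglyMeasurable (fun t ht =>
      ((Complex.continuousAt_ofReal_cpow_const _ _ (Or.inr (ne_of_gt ht))).mul
        hg.continuousAt).continuousWithinAt) measurableSet_Ioi
  -- on `ball z (re z / 2)` the `w`-derivative is dominated by `t ^ re s * exp (-(re z / 2) t)`,
  -- the norm of the Mellin integrand of `exp (-(re z / 2) t)` at `s + 1`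
  have hbound := (mellinConvergent_cexp_neg_mul (s := s + 1)
    (by rw [Complex.add_re, Complex.one_re]; linarith) (z := (z.re / 2 : ℝ)) (by simpa)).norm
  refine (hasDerivAt_integral_of_dominated_loc_of_deriv_le (Metric.ball_mem_nhds z hc)
    (F := fun w (t : ℝ) => (t : ℂ) ^ (s - 1) • Complex.exp (-w * t))
    (F' := fun w (t : ℝ) => (t : ℂ) ^ (s - 1) • (Complex.exp (-w * t) * -t))
    (Eventually.of_forall fun w => hmeas _ (by fun_prop)) (mellinConvergent_cexp_neg_mul hs hz)
    (hmeas _ (by fun_prop)) ?_ hbound ?_).2.differentiableAt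
  · refine (ae_restrict_iff' measurableSet_Ioi).2
      (Eventually.of_forall fun t (ht : 0 < t) w hw => ?_)
    have hw' := hball w hw
    simp only [add_sub_cancel_right, smul_eq_mul, norm_mul, norm_neg, Complex.norm_real,
      Complex.norm_cpow_eq_rpow_re_of_pos ht, norm_cexp_neg_mul_ofReal, Complex.ofReal_re,
      Real.norm_of_nonneg ht.le, Complex.sub_re, Complex.one_re]
    calc t ^ (s.re - 1) * (rexp (-w.re * t) * t) = t ^ s.re * rexp (-w.re * t) := by
          rw [Real.rpow_sub_one ht.ne']; field_simp
      _ ≤ t ^ s.re * rexp (-(z.re / 2) * t) := by gcongr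
  · exact Eventually.of_forall fun t w _ => by
      simpa using (((hasDerivAt_id w).neg.mul_const (t : ℂ)).cexp).const_mul ((t : ℂ) ^ (s - 1))

theorem frequently_ofReal_pos_nhdsNE_one :
    ∃ᶠ w : ℂ in 𝓝[≠] 1, ∃ r : ℝ, 0 < r ∧ w = r := by
  have hmap : Tendsto ((↑) : ℝ → ℂ) (𝓝[≠] 1) (𝓝[≠] 1) := by
    have := Complex.continuous_ofReal.continuousWithinAt.tendsto_nhdsWithin
      (x := 1) (s := {1}ᶜ) (t := {1}ᶜ) fun r hr => by simpa using hr
    rwa [Complex.ofReal_one] at this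
  refine hmap.frequently (Eventually.frequently ?_)
  filter_upwards [(lt_mem_nhds one_pos).filter_mono nhdsWithin_le_nhds] with r hr
  exact ⟨r, hr, rfl⟩

theorem mellin_cexp_neg_mul {s z : ℂ} (hs : 0 < s.re) (hz : 0 < z.re) :
    mellin (fun t : ℝ => Complex.exp (-z * t)) s = Complex.Gamma s * z ^ (-s) := by
  have hU : IsOpen {w : ℂ | 0 < w.re} := isOpen_lt continuous_const Complex.continuous_re
  refine AnalyticOnNhd.eqOn_of_preconnected_of_frequently_eq (z₀ := 1) (U := {w : ℂ | 0 < w.re})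
    (DifferentiableOn.analyticOnNhd (fun w hw =>
      (differentiableAt_mellin_cexp_neg_mul hs hw).differentiableWithinAt) hU)
    (DifferentiableOn.analyticOnNhd (fun w hw =>
      ((differentiableAt_id.cpow_const (Or.inl hw)).const_mul _).differentiableWithinAt) hU)
    (convex_halfSpace_re_gt 0).isPreconnected (by simp) ?_ hz
  refine frequently_ofReal_pos_nhdsNE_one.mono ?_
  rintro _ ⟨r, hr, rfl⟩
  exact mellin_cexp_neg_mul_ofReal hs hr

theorem isBigO_one_sub_cexp_neg_mul_nhds_zero (z : ℂ) :
    (fun t : ℝ => 1 - Complex.exp (-z * t)) =O[𝓝 0] (fun t => t) := by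
  have hderiv : HasDerivAt (fun t : ℝ => 1 - Complex.exp (-z * t)) (z * 1) 0 := by
    simpa using (((hasDerivAt_id (0 : ℝ)).ofReal_comp.const_mul (-z)).cexp).const_sub 1
  simpa using hderiv.isBigO_sub

theorem isBigO_cexp_neg_mul_sub_one_add_nhds_zero (z : ℂ) :
    (fun t : ℝ => Complex.exp (-z * t) - 1 + z * t) =O[𝓝 0] (· ^ 2) := by
  have h := (Complex.exp_sub_sum_range_isBigO_pow 2).comp_tendsto
    (((Complex.continuous_ofReal.const_mul (-z)).tendsto' 0 0 (by simp)))
  refine (h.trans (isBigO_of_le' (c := ‖z‖ ^ 2) _ fun t => ?_)).congr_left fun t => ?_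
  · simp [mul_pow]
  · simp only [Function.comp_apply, Finset.sum_range_succ, Finset.sum_range_zero, Nat.factorial]
    push_cast; ring

theorem norm_one_sub_cexp_neg_mul_le_two {z : ℂ} (hz : 0 ≤ z.re) {t : ℝ} (ht : 0 ≤ t) :
    ‖1 - Complex.exp (-z * t)‖ ≤ 2 := by
  have : ‖Complex.exp (-z * t)‖ ≤ 1 := by
    rw [norm_cexp_neg_mul_ofReal, Real.exp_le_one_iff]; nlinarith
  linarith [norm_sub_le (1 : ℂ) (Complex.exp (-z * t)), norm_one (α := ℂ)]

theorem isBigO_one_sub_cexp_neg_mul_atTop {z : ℂ} (hz : 0 ≤ z.re) :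
    (fun t : ℝ => 1 - Complex.exp (-z * t)) =O[atTop] (fun _ => (1 : ℝ)) :=
  isBigO_iff.2 ⟨2, (eventually_ge_atTop 0).mono fun t ht => by
    simpa using norm_one_sub_cexp_neg_mul_le_two hz ht⟩

theorem isBigO_cexp_neg_mul_sub_one_add_atTop {z : ℂ} (hz : 0 ≤ z.re) :
    (fun t : ℝ => Complex.exp (-z * t) - 1 + z * t) =O[atTop] (fun t => t) := by
  have h1 := (isBigO_one_sub_cexp_neg_mul_atTop hz).trans (isLittleO_const_id_atTop 1).isBigO
  have h2 : (fun t : ℝ => z * t) =O[atTop] (fun t => t) :=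
    isBigO_iff.2 ⟨‖z‖, Eventually.of_forall fun t => by simp⟩
  exact (h1.neg_left.add h2).congr_left fun t => by ring

theorem mellinConvergent_one_sub_cexp_neg_mul {s z : ℂ} (hs₀ : -1 < s.re) (hs₁ : s.re < 0)
    (hz : 0 ≤ z.re) : MellinConvergent (fun t : ℝ => 1 - Complex.exp (-z * t)) s :=
  mellinConvergent_of_isBigO_rpow
    ((Continuous.locallyIntegrable (by fun_prop)).locallyIntegrableOn _)
    (by simpa using isBigO_one_sub_cexp_neg_mul_atTop hz) (a := 0) (by simpa using hs₁)
    (by simpa using (isBigO_one_sub_cexp_neg_mul_nhds_zero z).mono nhdsWithin_le_nhds)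
    (b := -1) hs₀

theorem mellinConvergent_cexp_neg_mul_sub_one_add {s z : ℂ} (hs₀ : -2 < s.re)
    (hs₁ : s.re < -1) (hz : 0 ≤ z.re) :
    MellinConvergent (fun t : ℝ => Complex.exp (-z * t) - 1 + z * t) s :=
  mellinConvergent_of_isBigO_rpow
    ((Continuous.locallyIntegrable (by fun_prop)).locallyIntegrableOn _)
    (by simpa using isBigO_cexp_neg_mul_sub_one_add_atTop hz) (a := -1) hs₁
    (by simpa using (isBigO_cexp_neg_mul_sub_one_add_nhds_zero z).mono nhdsWithin_le_nhds)
    (b := -2) hs₀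

theorem Complex.cpow_neg_add_one {z : ℂ} (hz : z ≠ 0) (s : ℂ) :
    z ^ (-(s + 1)) = z ^ (-s) / z := by
  rw [neg_add, Complex.cpow_add _ _ hz, Complex.cpow_neg_one, div_eq_mul_inv]

theorem mellin_one_sub_cexp_neg_mul {s z : ℂ} (hs₀ : -1 < s.re) (hs₁ : s.re < 0)
    (hz : 0 < z.re) :
    mellin (fun t : ℝ => 1 - Complex.exp (-z * t)) s = -(Complex.Gamma s * z ^ (-s)) := by
  have hs : s ≠ 0 := by rintro rfl; rw [Complex.zero_re] at hs₁; linarith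
  have hz0 : z ≠ 0 := by rintro rfl; simp at hz
  have hre : (s + 1).re = s.re + 1 := by rw [Complex.add_re, Complex.one_re]
  have hderiv : ∀ t ∈ Ioi (0 : ℝ), HasDerivAt (fun t : ℝ => 1 - Complex.exp (-z * t))
      (z • Complex.exp (-z * t)) t := fun t _ => by
    simpa [mul_comm] using (((hasDerivAt_id t).ofReal_comp.const_mul (-z)).cexp).const_sub 1
  have key := mellin_deriv_of_isBigO_rpow hderiv
    ((mellinConvergent_cexp_neg_mul (by linarith) hz).const_smul z)
    (by simpa using isBigO_one_sub_cexp_neg_mul_atTop hz.le) (a := 0) hs₁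
    (by simpa using (isBigO_one_sub_cexp_neg_mul_nhds_zero z).mono nhdsWithin_le_nhds)
    (b := -1) hs₀
  rw [mellin_const_smul, mellin_cexp_neg_mul (by linarith) hz, Complex.Gamma_add_one s hs,
    Complex.cpow_neg_add_one hz0, smul_eq_mul] at key
  have hcancel : z * (s * Complex.Gamma s * (z ^ (-s) / z)) = s * (Complex.Gamma s * z ^ (-s)) := by
    field_simp
  rw [hcancel] at key
  exact mul_left_cancel₀ hs (by linear_combination key)

theorem mellin_cexp_neg_mul_sub_one_add {s z : ℂ} (hs₀ : -2 < s.re) (hs₁ : s.re < -1)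
    (hz : 0 < z.re) :
    mellin (fun t : ℝ => Complex.exp (-z * t) - 1 + z * t) s = Complex.Gamma s * z ^ (-s) := by
  have hs : s ≠ 0 := by rintro rfl; rw [Complex.zero_re] at hs₁; linarith
  have hz0 : z ≠ 0 := by rintro rfl; simp at hz
  have hre : (s + 1).re = s.re + 1 := by rw [Complex.add_re, Complex.one_re]
  have hderiv : ∀ t ∈ Ioi (0 : ℝ),
      HasDerivAt (fun t : ℝ => Complex.exp (-z * t) - 1 + z * t)
        (z • (1 - Complex.exp (-z * t))) t := fun t _ => by
    refine (((((hasDerivAt_id t).ofReal_comp.const_mul (-z)).cexp).sub_const 1).add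
      ((hasDerivAt_id t).ofReal_comp.const_mul z)).congr_deriv ?_
    simp only [id, Complex.ofReal_one, smul_eq_mul]; ring
  have key := mellin_deriv_of_isBigO_rpow hderiv
    ((mellinConvergent_one_sub_cexp_neg_mul (by linarith) (by linarith) hz.le).const_smul z)
    (by simpa using isBigO_cexp_neg_mul_sub_one_add_atTop hz.le) (a := -1) hs₁
    (by simpa using (isBigO_cexp_neg_mul_sub_one_add_nhds_zero z).mono nhdsWithin_le_nhds)
    (b := -2) hs₀
  rw [mellin_const_smul, mellin_one_sub_cexp_neg_mul (by linarith) (by linarith) hz,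
    Complex.Gamma_add_one s hs, Complex.cpow_neg_add_one hz0, smul_eq_mul] at key
  have hcancel : z * (s * Complex.Gamma s * (z ^ (-s) / z)) = s * (Complex.Gamma s * z ^ (-s)) := by
    field_simp
  rw [mul_neg, hcancel] at key
  exact mul_left_cancel₀ hs (by linear_combination key)

theorem Complex.arg_eq_arctan_of_re_pos {z : ℂ} (hz : 0 < z.re) :
    z.arg = Real.arctan (z.im / z.re) := by
  have h := abs_lt.1 (abs_arg_lt_pi_div_two_iff.2 (Or.inl hz))
  rw [← tan_arg, Real.arctan_tan h.1 h.2]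

theorem im_ofReal_sub_mul_I_cpow {lam : ℝ} (hlam : 0 < lam) (a β : ℝ) :
    (((lam : ℂ) - a * Complex.I) ^ (β : ℂ)).im
      = -((lam ^ 2 + a ^ 2) ^ (β / 2) * sin (β * arctan (a / lam))) := by
  have hnorm : ‖(lam : ℂ) - a * Complex.I‖ = (lam ^ 2 + a ^ 2) ^ (1 / 2 : ℝ) := by
    rw [← Real.sqrt_eq_rpow, Complex.norm_def, Complex.normSq_apply]; simp [sq]
  rw [Complex.cpow_ofReal_im, Complex.arg_eq_arctan_of_re_pos (by simpa), hnorm,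
    ← Real.rpow_mul (by positivity)]
  simp [arctan_neg, mul_comm, div_eq_inv_mul]

theorem rpow_mul_exp_mul_sin_sub_eq_im {lam a β t : ℝ} (ht : 0 < t) :
    t ^ (-1 - β) * rexp (-lam * t) * (sin (a * t) - a * t) =
      ((t : ℂ) ^ (((-β : ℝ) : ℂ) - 1) • (Complex.exp (-(lam - a * Complex.I) * t) - 1
          + (lam - a * Complex.I) * t)
        + (a * Complex.I) • ((t : ℂ) ^ (((1 - β : ℝ) : ℂ) - 1)
          • (1 - Complex.exp (-lam * t)))).im := by
  have h1 : (t : ℂ) ^ (((-β : ℝ) : ℂ) - 1) = ((t ^ (-1 - β) : ℝ) : ℂ) := by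
    rw [Complex.ofReal_cpow ht.le]; push_cast; ring_nf
  have h2 : (t : ℂ) ^ (((1 - β : ℝ) : ℂ) - 1) = ((t ^ (-1 - β) * t : ℝ) : ℂ) := by
    rw [← Real.rpow_add_one ht.ne', Complex.ofReal_cpow ht.le]; push_cast; ring_nf
  have hE : Complex.exp (-(lam - a * Complex.I) * t)
      = (rexp (-lam * t) : ℂ) * Complex.exp ((a * t : ℝ) * Complex.I) := by
    rw [Complex.ofReal_exp, ← Complex.exp_add]; push_cast; ring_nf
  have hL : Complex.exp (-lam * t) = (rexp (-lam * t) : ℂ) := by push_cast; ring_nf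
  rw [h1, h2, hE, hL, smul_eq_mul, smul_eq_mul, smul_eq_mul]
  have hsplit : ((t ^ (-1 - β) : ℝ) : ℂ) * ((rexp (-lam * t) : ℂ)
        * Complex.exp ((a * t : ℝ) * Complex.I) - 1 + (lam - a * Complex.I) * t)
      + a * Complex.I * (((t ^ (-1 - β) * t : ℝ) : ℂ) * (1 - (rexp (-lam * t) : ℂ)))
      = ((t ^ (-1 - β) * rexp (-lam * t) : ℝ) : ℂ)
          * (Complex.exp ((a * t : ℝ) * Complex.I) - (a * t : ℝ) * Complex.I)
        + ((t ^ (-1 - β) * (lam * t - 1) : ℝ) : ℂ) := by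
    push_cast; ring
  rw [hsplit, Complex.add_im, Complex.ofReal_im, add_zero, Complex.im_ofReal_mul, Complex.sub_im,
    Complex.exp_ofReal_mul_I_im]
  simp

theorem setIntegral_rpow_mul_exp_mul_sin_sub_eq_im_mellin {lam a β : ℝ} (hlam : 0 ≤ lam)
    (hβ₁ : 1 < β) (hβ₂ : β < 2) :
    ∫ t in Ioi (0 : ℝ), t ^ (-1 - β) * rexp (-lam * t) * (sin (a * t) - a * t) =
      (mellin (fun t : ℝ => Complex.exp (-(lam - a * Complex.I) * t) - 1
          + (lam - a * Complex.I) * t) (-β : ℝ)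
        + (a * Complex.I)
          • mellin (fun t : ℝ => 1 - Complex.exp (-lam * t)) (1 - β : ℝ)).im := by
  have hg := mellinConvergent_cexp_neg_mul_sub_one_add (s := (-β : ℝ))
    (by simpa using hβ₂) (by simpa using hβ₁) (z := lam - a * Complex.I) (by simpa using hlam)
  have hh := mellinConvergent_one_sub_cexp_neg_mul (s := (1 - β : ℝ))
    (by rw [Complex.ofReal_re]; linarith) (by rw [Complex.ofReal_re]; linarith) (z := lam)
    (by simpa using hlam)
  rw [setIntegral_congr_fun measurableSet_Ioi fun t ht => rpow_mul_exp_mul_sin_sub_eq_im ht,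
    mellin, mellin, ← integral_smul]
  exact (integral_im (hg.add (hh.smul (a * Complex.I)))).trans
    (congrArg Complex.im (integral_add hg (hh.smul (a * Complex.I))))

/-- For `λ > 0`, `β ∈ (1,2)` and `η = arctan(a/λ)`:
`∫₀^∞ r^{-1-β} e^{-λr}(sin(ar) - ar) dr = -Γ(-β)(λ²+a²)^{β/2} sin(βη) - Γ(1-β)λ^{β-1} a`. -/
theorem stmt_5 (lam beta a : ℝ) (hlam : 0 < lam) (hβ : beta ∈ Set.Ioo (1:ℝ) 2) :
    ∫ r in Set.Ioi (0:ℝ), r ^ (-1 - beta) * Real.exp (-lam * r) * (Real.sin (a * r) - a * r)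
      = -Real.Gamma (-beta) * (lam ^ 2 + a ^ 2) ^ (beta / 2)
          * Real.sin (beta * Real.arctan (a / lam))
        - Real.Gamma (1 - beta) * lam ^ (beta - 1) * a := by
  obtain ⟨hβ₁, hβ₂⟩ := hβ
  rw [setIntegral_rpow_mul_exp_mul_sin_sub_eq_im_mellin hlam.le hβ₁ hβ₂,
    mellin_cexp_neg_mul_sub_one_add (by simpa using hβ₂) (by simpa using hβ₁) (by simpa),
    mellin_one_sub_cexp_neg_mul (by rw [Complex.ofReal_re]; linarith)
      (by rw [Complex.ofReal_re]; linarith) (by simpa),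
    Complex.Gamma_ofReal, Complex.Gamma_ofReal, Complex.ofReal_neg, neg_neg, ← Complex.ofReal_neg,
    ← Complex.ofReal_cpow hlam.le, smul_eq_mul, Complex.add_im, Complex.im_ofReal_mul,
    im_ofReal_sub_mul_I_cpow hlam]
  simp only [Complex.mul_im, Complex.neg_im, Complex.neg_re, Complex.mul_re, Complex.ofReal_re,
    Complex.ofReal_im, Complex.I_re, Complex.I_im, neg_sub]
  ring
end

section
/- Let β ∈ (0,1), λ > 0, and a ∈ ℝ. Then Re[(λ - ia)^β] - λ^β ≥ 0 with equality iff a = 0, where (λ - ia)^β is the principal branch power. -/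
open Complex Real

/-! Writing `z = λ - ia = ‖z‖ e^{iθ}` with `|θ| < π/2`, we have `λ^β = ‖z‖^β cos^β θ` and
`Re z^β = ‖z‖^β cos (βθ)`, so it suffices that `cos^β θ < cos (βθ)` for `θ ≠ 0`. This follows from
Bernoulli's inequality `cos^β θ ≤ 1 + β (cos θ - 1)` and strict concavity of `cos` on
`[-π/2, π/2]`, applied between `0` and `θ`. -/

lemma Real.cos_rpow_lt_cos_mul {β θ : ℝ} (hβ0 : 0 < β) (hβ1 : β < 1)
    (hθ : θ ∈ Set.Icc (-(π / 2)) (π / 2)) (hθ0 : θ ≠ 0) :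
    cos θ ^ β < cos (β * θ) := by
  have hcos : 0 ≤ cos θ := cos_nonneg_of_mem_Icc hθ
  have hzero : (0 : ℝ) ∈ Set.Icc (-(π / 2)) (π / 2) := ⟨by linarith [pi_pos], by linarith [pi_pos]⟩
  have bernoulli : cos θ ^ β ≤ (1 - β) * cos 0 + β * cos θ := by
    have := rpow_one_add_le_one_add_mul_self (s := cos θ - 1) (by linarith) hβ0.le hβ1.le
    rw [add_sub_cancel] at this
    rw [cos_zero]
    linarith
  have concave : (1 - β) * cos 0 + β * cos θ < cos ((1 - β) * 0 + β * θ) :=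
    strictConcaveOn_cos_Icc.2 hzero hθ hθ0.symm (by linarith) hβ0 (by ring)
  rw [mul_zero, zero_add] at concave
  exact bernoulli.trans_lt concave

lemma Complex.re_rpow_lt_re_cpow {z : ℂ} {β : ℝ} (hβ0 : 0 < β) (hβ1 : β < 1)
    (hre : 0 < z.re) (him : z.im ≠ 0) :
    z.re ^ β < (z ^ (β : ℂ)).re := by
  have hz : z ≠ 0 := fun h => by simp [h] at hre
  have harg : z.arg ∈ Set.Icc (-(π / 2)) (π / 2) :=
    abs_le.1 (abs_arg_le_pi_div_two_iff.2 hre.le)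
  have harg0 : z.arg ≠ 0 := fun h => him (arg_eq_zero_iff.1 h).2
  rw [cpow_ofReal_re, ← norm_mul_cos_arg, mul_rpow (norm_nonneg z) (cos_nonneg_of_mem_Icc harg),
    mul_comm z.arg]
  exact mul_lt_mul_of_pos_left (cos_rpow_lt_cos_mul hβ0 hβ1 harg harg0)
    (rpow_pos_of_pos (norm_pos_iff.2 hz) β)

/-- For `β ∈ (0,1)`, `λ > 0`, `a ∈ ℝ`, the principal-branch power satisfies
`Re[(λ - ia)^β] - λ^β ≥ 0`, with equality iff `a = 0`. -/
theorem stmt_8 (lam beta a : ℝ) (hlam : 0 < lam) (hβ : beta ∈ Set.Ioo (0:ℝ) 1) :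
    0 ≤ (((lam : ℂ) - Complex.I * (a : ℂ)) ^ (beta : ℂ)).re - lam ^ beta
    ∧ ((((lam : ℂ) - Complex.I * (a : ℂ)) ^ (beta : ℂ)).re - lam ^ beta = 0 ↔ a = 0) := by
  rcases eq_or_ne a 0 with rfl | ha
  · simp [← ofReal_cpow hlam.le]
  · have hlt : lam ^ beta < (((lam : ℂ) - I * a) ^ (beta : ℂ)).re := by
      simpa using re_rpow_lt_re_cpow (z := lam - I * a) hβ.1 hβ.2 (by simpa using hlam)
        (by simpa using ha)
    exact ⟨by linarith, by simp only [ha, iff_false]; linarith⟩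
end
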